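/- arXiv:1206.0137 — 13 statements merged into one kernel-verified Lean document; each statement's English description precedes it below -/
import Mathlib

section
/- If U and V are well-ordered subsets of [0,1] and w ∈ [0,1], then the set {(u,v) ∈ U × V : u + v = w} is finite. -/
theorem sum_fiber_finite_general (U V : Set ℝ)
    (hUwo : U.IsWF) (hVwo : V.IsWF) (w : ℝ) :
    {p : ℝ × ℝ | p.1 ∈ U ∧ p.2 ∈ V ∧ p.1 + p.2 = w}.Finite :=
  Set.AddAntidiagonal.finite_of_isWF hUwo hVwo w

/-- If U, V ⊆ [0,1] are well-ordered and w ∈ [0,1], then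
{(u,v) ∈ U × V : u + v = w} is finite. -/
theorem sum_fiber_finite (U V : Set ℝ)
    (hU : U ⊆ Set.Icc 0 1) (hV : V ⊆ Set.Icc 0 1)
    (hUwo : U.IsWF) (hVwo : V.IsWF) (w : ℝ) (hw : w ∈ Set.Icc (0:ℝ) 1) :
    {p : ℝ × ℝ | p.1 ∈ U ∧ p.2 ∈ V ∧ p.1 + p.2 = w}.Finite :=
  sum_fiber_finite_general U V hUwo hVwo w
end

section
/- Let R be a commutative ring that is self-injective (injective as a module over itself). Then for every finitely generated ideal J of R, the double annihilator of J equals J, i.e. ann_R(ann_R(J)) = J. -/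
/-!
Induct on a finite generating set. Suppose `ann (ann B) = B` and `x` kills `ann (Rc + B)`.
Then `c t ↦ x t` is a well-defined map `c • ann B → R`, so by Baer's criterion it is
multiplication by some `d`; hence `x - d c` kills `ann B`, i.e. lies in `B`, and `x ∈ Rc + B`.
-/

open Submodule

theorem Module.Baer.exists_comp_eq_of_ker_le {R Q M N : Type*} [Ring R]
    [AddCommGroup Q] [Module R Q] [AddCommGroup M] [Module R M] [AddCommGroup N] [Module R N]
    (hQ : Module.Baer R Q) (f : M →ₗ[R] N) (g : M →ₗ[R] Q)
    (hfg : LinearMap.ker f ≤ LinearMap.ker g) : ∃ φ : N →ₗ[R] Q, φ ∘ₗ f = g := by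
  obtain ⟨φ, hφ⟩ := hQ.extension_property ((LinearMap.ker f).liftQ f le_rfl)
    (LinearMap.ker_eq_bot.mp (ker_liftQ_eq_bot _ _ _ le_rfl)) ((LinearMap.ker f).liftQ g hfg)
  exact ⟨φ, by rw [← liftQ_mkQ _ f le_rfl, ← LinearMap.comp_assoc, hφ, liftQ_mkQ]⟩

theorem Ideal.le_annihilator_annihilator {R : Type*} [CommRing R] (J : Ideal R) :
    J ≤ annihilator (annihilator J) :=
  le_annihilator_iff.mpr (by rw [smul_eq_mul, mul_comm, annihilator_mul])

theorem Ideal.annihilator_annihilator_bot (R : Type*) [CommRing R] :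
    annihilator (annihilator (⊥ : Ideal R)) = ⊥ := by
  rw [annihilator_bot, annihilator_top, Module.annihilator_eq_bot.mpr inferInstance]

theorem Ideal.annihilator_annihilator_span_singleton_sup {R : Type*} [CommRing R]
    (hR : Module.Baer R R) {B : Ideal R} (hB : annihilator (annihilator B) = B) (c : R) :
    annihilator (annihilator (span {c} ⊔ B)) = span {c} ⊔ B := by
  refine le_antisymm (fun x hx ↦ ?_) (le_annihilator_annihilator _)
  have hker : LinearMap.ker (LinearMap.mulLeft R c ∘ₗ (annihilator B).subtype) ≤
      LinearMap.ker (LinearMap.mulLeft R x ∘ₗ (annihilator B).subtype) := by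
    rintro ⟨t, ht⟩ hct
    have ht' : t ∈ annihilator (span {c} ⊔ B) := by
      rw [annihilator_sup, mem_inf, mem_annihilator_span_singleton, smul_eq_mul, mul_comm]
      exact ⟨hct, ht⟩
    exact mem_annihilator.mp hx t ht'
  obtain ⟨φ, hφ⟩ := hR.exists_comp_eq_of_ker_le _ _ hker
  have hdiff : x - φ 1 * c ∈ B := by
    rw [← hB, mem_annihilator]
    intro t ht
    have hφt : φ (c * t) = x * t := LinearMap.congr_fun hφ ⟨t, ht⟩
    rw [← mul_one (c * t), ← smul_eq_mul, map_smul, smul_eq_mul] at hφt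
    rw [smul_eq_mul, sub_mul, ← hφt]
    ring
  rw [← add_sub_cancel (φ 1 * c) x]
  exact add_mem (mem_sup_left (mem_span_singleton'.mpr ⟨_, rfl⟩)) (mem_sup_right hdiff)

/-- In a commutative self-injective ring, every finitely generated ideal equals
its double annihilator. -/
theorem double_annihilator_of_fg (R : Type*) [CommRing R]
    (hR : Module.Injective R R) (J : Ideal R) (hJ : J.FG) :
    Submodule.annihilator (Submodule.annihilator J) = J := by
  classical
  obtain ⟨s, rfl⟩ := hJ
  induction s using Finset.induction_on with
  | empty => simpa using Ideal.annihilator_annihilator_bot R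
  | insert c s _ ih =>
    rw [Finset.coe_insert, Ideal.span_insert]
    exact Ideal.annihilator_annihilator_span_singleton_sup (Module.Baer.of_injective hR) ih c
end

section
/- Let R be a commutative self-injective ring and let I, J be ideals of R. Then ann_R(I + J) = ann_R(I) ∩ ann_R(J) and ann_R(I ∩ J) = ann_R(I) + ann_R(J). -/
/-!
If `a` kills `I ⊓ J`, then `x + y ↦ a * x` (`x ∈ I`, `y ∈ J`) is a well-defined linear map
`I ⊔ J → R`. By self-injectivity it is multiplication by some `r`, so `a - r` kills `I` and
`r` kills `J`.
-/

namespace LinearMap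

variable {R M Q : Type*} [Ring R] [AddCommGroup M] [Module R M] [AddCommGroup Q] [Module R Q]

noncomputable def extendSupByZero (p p' : Submodule R M) (f : p →ₗ[R] Q)
    (hf : ∀ x : p, (x : M) ∈ p' → f x = 0) : (p ⊔ p' : Submodule R M) →ₗ[R] Q :=
  (Submodule.liftQ _ f fun x hx ↦ hf x (Submodule.mem_inf.mp hx).2) ∘ₗ
    (quotientInfEquivSupQuotient p p').symm.toLinearMap ∘ₗ Submodule.mkQ _

variable {p p' : Submodule R M} {f : p →ₗ[R] Q} {hf : ∀ x : p, (x : M) ∈ p' → f x = 0}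

theorem extendSupByZero_apply_of_mem_left (x : (p ⊔ p' : Submodule R M)) (hx : (x : M) ∈ p) :
    extendSupByZero p p' f hf x = f ⟨x, hx⟩ := by
  simp only [extendSupByZero, coe_comp, Function.comp_apply, Submodule.mkQ_apply,
    LinearEquiv.coe_coe, quotientInfEquivSupQuotient_symm_apply_left _ _ x hx]
  rfl

theorem extendSupByZero_apply_of_mem_right (x : (p ⊔ p' : Submodule R M)) (hx : (x : M) ∈ p') :
    extendSupByZero p p' f hf x = 0 := by
  simp [extendSupByZero, quotientInfEquivSupQuotient_symm_apply_right _ _ hx]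

end LinearMap

namespace Ideal

variable {R : Type*} [CommRing R]

theorem exists_eq_mul_of_injective (hR : Module.Injective R R) (K : Ideal R)
    (f : K →ₗ[R] R) : ∃ r : R, ∀ x : K, f x = x * r := by
  obtain ⟨g, hg⟩ := Module.Baer.of_injective hR K f
  refine ⟨g 1, fun x ↦ ?_⟩
  rw [← hg x x.2, ← smul_eq_mul, ← map_smul, smul_eq_mul, mul_one]

theorem annihilator_inf_le_sup_of_injective (hR : Module.Injective R R) (I J : Ideal R) :
    Submodule.annihilator (I ⊓ J) ≤ Submodule.annihilator I ⊔ Submodule.annihilator J := by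
  intro a ha
  let g := LinearMap.extendSupByZero I J (a • I.subtype) fun x hxJ ↦
    Submodule.mem_annihilator.mp ha x ⟨x.2, hxJ⟩
  obtain ⟨r, hr⟩ := exists_eq_mul_of_injective hR _ g
  have hrI : ∀ x ∈ I, x * r = a * x := fun x hx ↦
    (hr ⟨x, Submodule.mem_sup_left hx⟩).symm.trans
      (LinearMap.extendSupByZero_apply_of_mem_left _ hx)
  have hrJ : ∀ y ∈ J, y * r = 0 := fun y hy ↦
    (hr ⟨y, Submodule.mem_sup_right hy⟩).symm.trans
      (LinearMap.extendSupByZero_apply_of_mem_right _ hy)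
  rw [← sub_add_cancel a r]
  refine Submodule.add_mem_sup (Submodule.mem_annihilator.mpr fun x hx ↦ ?_)
    (Submodule.mem_annihilator.mpr fun y hy ↦ ?_)
  · rw [smul_eq_mul, sub_mul, ← hrI x hx, mul_comm, sub_self]
  · rw [smul_eq_mul, mul_comm, hrJ y hy]

end Ideal

/-- Annihilators of sums and intersections of ideals in a self-injective ring. -/
theorem annihilator_sup_inf (R : Type*) [CommRing R]
    (hR : Module.Injective R R) (I J : Ideal R) :
    Submodule.annihilator (I ⊔ J) =
      Submodule.annihilator I ⊓ Submodule.annihilator J ∧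
    Submodule.annihilator (I ⊓ J) =
      Submodule.annihilator I ⊔ Submodule.annihilator J :=
  ⟨Submodule.annihilator_sup I J,
    le_antisymm (Ideal.annihilator_inf_le_sup_of_injective hR I J)
      (sup_le (Submodule.annihilator_mono inf_le_left) (Submodule.annihilator_mono inf_le_right))⟩
end

section
/- Let R be a commutative local self-injective ring and let I, J be nonzero ideals of R. Then I ∩ J is nonzero. -/
/-!
If `I ⊓ J = ⊥`, then `I × J` embeds into `R` by `(x, y) ↦ x + y`, so by self-injectivity the
projection onto `I` extends to an endomorphism of `R`, i.e. to multiplication by some `c` with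
`x * c = x` on `I` and `y * c = 0` on `J`. In a local ring `c` or `1 - c` is a unit, which
kills `J` or `I` respectively.
-/

theorem Submodule.injective_coprod_subtype_of_disjoint {R M : Type*} [Ring R] [AddCommGroup M]
    [Module R M] {p q : Submodule R M} (h : Disjoint p q) :
    Function.Injective (p.subtype.coprod q.subtype) := by
  rw [← LinearMap.ker_eq_bot, LinearMap.ker_coprod_of_disjoint_range, p.ker_subtype,
    q.ker_subtype, Submodule.prod_bot]
  rwa [p.range_subtype, q.range_subtype]

theorem Ideal.exists_mul_eq_self_and_mul_eq_zero_of_disjoint {R : Type*} [CommRing R]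
    (hR : Module.Injective R R) {I J : Ideal R} (h : Disjoint I J) :
    ∃ c : R, (∀ x ∈ I, x * c = x) ∧ ∀ y ∈ J, y * c = 0 := by
  obtain ⟨f, hf⟩ := hR.out _ (Submodule.injective_coprod_subtype_of_disjoint h)
    (I.subtype ∘ₗ LinearMap.fst R I J)
  have hf_mul (x : R) : f x = x * f 1 := by simpa using f.map_smul x 1
  refine ⟨f 1, fun x hx ↦ ?_, fun y hy ↦ ?_⟩
  · simpa [← hf_mul] using hf (⟨x, hx⟩, 0)
  · simpa [← hf_mul] using hf (0, ⟨y, hy⟩)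

theorem IsLocalRing.eq_zero_or_eq_zero_of_mul_eq_self_of_mul_eq_zero {R : Type*} [CommRing R]
    [IsLocalRing R] {a b c : R} (ha : a * c = a) (hb : b * c = 0) : a = 0 ∨ b = 0 := by
  rcases IsLocalRing.isUnit_or_isUnit_one_sub_self c with hc | hc
  · exact Or.inr (hc.mul_left_eq_zero.mp hb)
  · exact Or.inl (hc.mul_left_eq_zero.mp (by rw [mul_sub, mul_one, ha, sub_self]))

/-- In a local self-injective commutative ring, two nonzero ideals have nonzero
intersection. -/
theorem inf_ne_bot_of_local_selfinjective (R : Type*) [CommRing R] [IsLocalRing R]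
    (hR : Module.Injective R R) (I J : Ideal R) (hI : I ≠ ⊥) (hJ : J ≠ ⊥) :
    I ⊓ J ≠ ⊥ := by
  intro hIJ
  obtain ⟨c, hcI, hcJ⟩ :=
    Ideal.exists_mul_eq_self_and_mul_eq_zero_of_disjoint hR (disjoint_iff.mpr hIJ)
  obtain ⟨x, hxI, hx⟩ := Submodule.exists_mem_ne_zero_of_ne_bot hI
  obtain ⟨y, hyJ, hy⟩ := Submodule.exists_mem_ne_zero_of_ne_bot hJ
  rcases IsLocalRing.eq_zero_or_eq_zero_of_mul_eq_self_of_mul_eq_zero (hcI x hxI) (hcJ y hyJ)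
    with h | h
  exacts [hx h, hy h]
end

section
/- Let R be a commutative self-injective ring and a ∈ R. Then the quotient ring Q = R/ann_R(a) is self-injective (injective as a Q-module). -/
/-!
For an ideal `I` of a commutative ring `R` and an injective `R`-module `E`, the `I`-torsion
`E[I] = {e | I • e = 0} ≅ Hom_R(R ⧸ I, E)` is an injective `R ⧸ I`-module: a map from an ideal of
`R ⧸ I` pulls back to a map from an ideal of `R` containing `I`, which extends to `r ↦ r • e`,
and `e` is `I`-torsion because the pulled-back map vanishes on `I`. For `E = R` and `I = ann(a)`, self-injectivity also gives `ann(ann(a)) = aR`, and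
`r ↦ r a` identifies `R ⧸ ann(a)` with `aR`.
-/

open Submodule

section

variable {R : Type*} [CommRing R]

theorem Ideal.annihilator_annihilator_span_singleton (hR : Module.Baer R R) (a : R) :
    (Ideal.span {a}).annihilator.annihilator = Ideal.span {a} := by
  refine le_antisymm (fun x hx ↦ ?_) fun x hx ↦ mem_annihilator.2 fun t ht ↦ ?_
  · -- `r a ↦ r x` is well defined on `(a)` because `ann(a) ⊆ ann(x)`; extend it to `R`.
    have hle : torsionOf R R a ≤ LinearMap.ker (LinearMap.toSpanSingleton R R x) := fun t ht ↦ by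
      rw [mem_torsionOf_iff, ← mem_annihilator_span_singleton] at ht
      simpa [mul_comm] using mem_annihilator.1 hx t ht
    obtain ⟨h, hh⟩ := hR (Ideal.span {a})
      ((torsionOf R R a).liftQ _ hle ∘ₗ (quotTorsionOfEquivSpanSingleton R R a).symm.toLinearMap)
    have hmk : (quotTorsionOfEquivSpanSingleton R R a).symm ⟨a, mem_span_singleton_self a⟩ =
        Submodule.Quotient.mk 1 := by
      rw [LinearEquiv.symm_apply_eq, quotTorsionOfEquivSpanSingleton_apply_mk, one_smul]
    have hha : h a = x := by
      rw [hh a (mem_span_singleton_self a), LinearMap.comp_apply, LinearEquiv.coe_coe, hmk,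
        liftQ_apply, LinearMap.toSpanSingleton_apply, one_smul]
    have hx_eq : x = a * h 1 := by rw [← hha, ← smul_eq_mul, ← map_smul, smul_eq_mul, mul_one]
    exact hx_eq ▸ Ideal.mul_mem_right _ _ (mem_span_singleton_self a)
  · rw [smul_eq_mul, mul_comm]
    exact mem_annihilator.1 ht x hx

theorem Module.Baer.torsionBySet {E : Type*} [AddCommGroup E] [Module R E]
    (hE : Module.Baer R E) (I : Ideal R) :
    Module.Baer (R ⧸ I) (Submodule.torsionBySet R E I) := by
  intro J g
  let φ : J.comap (Ideal.Quotient.mk I) →ₗ[R] E :=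
    (Submodule.torsionBySet R E I).subtype ∘ₗ g.restrictScalars R ∘ₗ
      (Ideal.Quotient.mkₐ R I).toLinearMap.restrict (q := J.restrictScalars R) fun _ ↦ id
  obtain ⟨ψ, hψ⟩ := hE _ φ
  have hψ_smul : ∀ x (hx : Ideal.Quotient.mk I x ∈ J), x • ψ 1 = g ⟨_, hx⟩ := fun x hx ↦ by
    rw [← map_smul, smul_eq_mul, mul_one, hψ x hx]
    rfl
  have hmem : ψ 1 ∈ Submodule.torsionBySet R E I := by
    refine (mem_torsionBySet_iff _ _).2 fun ⟨t, ht⟩ ↦ ?_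
    have hmk : Ideal.Quotient.mk I t = 0 := Ideal.Quotient.eq_zero_iff_mem.2 ht
    rw [hψ_smul t (hmk ▸ J.zero_mem)]
    simp only [hmk]
    exact congrArg Subtype.val g.map_zero
  refine ⟨LinearMap.toSpanSingleton _ _ ⟨ψ 1, hmem⟩, fun q hq ↦ ?_⟩
  obtain ⟨x, rfl⟩ := Ideal.Quotient.mk_surjective q
  ext
  exact hψ_smul x hq

noncomputable def Ideal.quotAnnihilatorSpanSingletonEquiv (hR : Module.Baer R R) (a : R) :
    (R ⧸ (Ideal.span {a}).annihilator) ≃ₗ[R ⧸ (Ideal.span {a}).annihilator]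
      Submodule.torsionBySet R R (Ideal.span {a}).annihilator := by
  set I := (Ideal.span {a}).annihilator
  have ha : a ∈ Submodule.torsionBySet R R I :=
    (mem_torsionBySet_iff _ _).2 fun ⟨t, ht⟩ ↦ (mem_annihilator_span_singleton a t).1 ht
  refine .ofBijective (LinearMap.toSpanSingleton _ _ ⟨a, ha⟩) ⟨?_, fun x ↦ ?_⟩
  · refine (injective_iff_map_eq_zero _).2 fun q hq ↦ ?_
    obtain ⟨r, rfl⟩ := Ideal.Quotient.mk_surjective q
    refine Ideal.Quotient.eq_zero_iff_mem.2 ((mem_annihilator_span_singleton a r).2 ?_)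
    simpa using congrArg Subtype.val hq
  · have hx : (x : R) ∈ I.annihilator := mem_annihilator.2 fun t ht ↦ by
      rw [smul_eq_mul, mul_comm]
      exact (mem_torsionBySet_iff _ _).1 x.2 ⟨t, ht⟩
    rw [Ideal.annihilator_annihilator_span_singleton hR] at hx
    obtain ⟨r, hr⟩ := Ideal.mem_span_singleton'.1 hx
    exact ⟨Ideal.Quotient.mk I r, Subtype.ext (by simpa using hr)⟩

end

/-- If R is commutative self-injective and a ∈ R, then R/ann(a) is self-injective. -/
theorem quotient_by_annihilator_selfinjective (R : Type*) [CommRing R]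
    (hR : Module.Injective R R) (a : R) :
    Module.Injective (R ⧸ Submodule.annihilator (Ideal.span {a}))
      (R ⧸ Submodule.annihilator (Ideal.span {a})) := by
  have hBaer : Module.Baer R R := .of_injective hR
  exact ((hBaer.torsionBySet _).of_equiv
    (Ideal.quotAnnihilatorSpanSingletonEquiv hBaer a).symm).injective
end

section
/- Let R be a Noetherian commutative ring such that for every ideal J of R we have ann_R(ann_R(J)) = J. Then R is Artinian. -/
/-! The annihilator reverses inclusion of ideals, and the double annihilator condition makes it
injective, so a strictly descending chain of ideals would give a strictly ascending chain of
annihilators, which cannot exist in a Noetherian ring. -/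

theorem isArtinian_of_injective_annihilator {R M : Type*} [CommSemiring R] [IsNoetherianRing R]
    [AddCommMonoid M] [Module R M]
    (h : Function.Injective (Submodule.annihilator : Submodule R M → Ideal R)) :
    IsArtinian R M :=
  have antitone : Antitone (Submodule.annihilator : Submodule R M → Ideal R) :=
    fun _ _ => Submodule.annihilator_mono
  (antitone.strictAnti_of_injective h).wellFoundedLT

/-- A Noetherian commutative ring satisfying the double annihilator condition for
all ideals is Artinian. -/
theorem artinian_of_double_annihilator (R : Type*) [CommRing R] [IsNoetherianRing R]
    (h : ∀ J : Ideal R, Submodule.annihilator (Submodule.annihilator J) = J) :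
    IsArtinianRing R :=
  isArtinian_of_injective_annihilator (Function.LeftInverse.injective h)
end

section
/- Let R be a Noetherian commutative ring such that ann_R(ann_R(J)) = J for every ideal J. Then R is self-injective, i.e. R is injective as an R-module. -/
/-!
By Baer's criterion it suffices that every `R`-linear map `f : I → R` on an ideal is
multiplication by an element; as `R` is Noetherian, `I` is finitely generated, and we add
generators one at a time. If `f = r * ·` on `J` and `b` is a new generator, then
`c := f b - r b` is killed by every `x` with `x b ∈ J`, i.e. `ann (ann J · (b)) ≤ ann (c)`.
Taking annihilators once more and using the double annihilator condition,
`c ∈ ann J · (b)`, say `c = t b` with `t J = 0`, and then `f = (r + t) * ·` on `J + (b)`.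
-/

open Submodule

namespace Ideal

variable {R : Type*} [CommRing R]

def ExtendsToRing (I : Ideal R) : Prop :=
  ∀ f : I →ₗ[R] R, ∃ r : R, ∀ x : I, f x = r * x

theorem extendsToRing_bot : (⊥ : Ideal R).ExtendsToRing := fun f ↦
  ⟨0, fun x ↦ by rw [Subsingleton.elim x 0, map_zero, zero_mul]⟩

theorem mem_annihilator_mul_span_singleton
    (h : ∀ J : Ideal R, annihilator (annihilator J) = J) {J : Ideal R} {b c : R}
    (hc : ∀ x : R, x * b ∈ J → x * c = 0) :
    c ∈ annihilator J * span {b} := by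
  have hann : annihilator (annihilator J * span {b}) ≤ annihilator (span {c}) := by
    intro y hy
    have hyb : y * b ∈ J := by
      rw [← h J, mem_annihilator]
      intro a ha
      simpa [mul_comm, mul_left_comm] using
        mem_annihilator.mp hy _ (mul_mem_mul ha (mem_span_singleton_self b))
    rw [mem_annihilator_span_singleton, smul_eq_mul, hc y hyb]
  refine (?_ : span {c} ≤ _) (mem_span_singleton_self c)
  calc span {c} = annihilator (annihilator (span {c})) := (h _).symm
    _ ≤ annihilator (annihilator (annihilator J * span {b})) := annihilator_mono hann
    _ = annihilator J * span {b} := h _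

theorem ExtendsToRing.sup_span_singleton
    (h : ∀ J : Ideal R, annihilator (annihilator J) = J) {J : Ideal R}
    (hJ : J.ExtendsToRing) (b : R) : (J ⊔ span {b}).ExtendsToRing := by
  intro f
  have hJle : J ≤ J ⊔ span {b} := le_sup_left
  let b' : ↥(J ⊔ span {b}) := ⟨b, mem_sup_right (mem_span_singleton_self b)⟩
  obtain ⟨r, hr⟩ := hJ (f ∘ₗ inclusion hJle)
  have hc : ∀ x : R, x * b ∈ J → x * (f b' - r * b) = 0 := by
    intro x hxb
    have : f (x • b') = r * (x * b) := hr ⟨x * b, hxb⟩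
    rw [map_smul, smul_eq_mul] at this
    linear_combination this
  obtain ⟨t, ht, htb⟩ := mem_mul_span_singleton.mp (mem_annihilator_mul_span_singleton h hc)
  refine ⟨r + t, fun ⟨x, hx⟩ ↦ ?_⟩
  obtain ⟨v, hv, w, hw, rfl⟩ := mem_sup.mp hx
  obtain ⟨a, rfl⟩ := Submodule.mem_span_singleton.mp hw
  have hfx : f ⟨v + a • b, hx⟩ = r * v + a * f b' := by
    rw [show (⟨v + a • b, hx⟩ : ↥(J ⊔ span {b})) = inclusion hJle ⟨v, hv⟩ + a • b' from rfl,
      map_add, map_smul, smul_eq_mul, ← hr ⟨v, hv⟩, LinearMap.comp_apply]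
  have htv : t * v = 0 := by simpa using mem_annihilator.mp ht v hv
  rw [hfx, Submodule.coe_mk, smul_eq_mul]
  linear_combination -a * htb - htv

theorem extendsToRing_of_fg (h : ∀ J : Ideal R, annihilator (annihilator J) = J)
    {I : Ideal R} (hI : I.FG) : I.ExtendsToRing := by
  induction I, hI using fg_sup_span_induction with
  | bot => exact extendsToRing_bot
  | sup J b _ hJ => exact hJ.sup_span_singleton h b

end Ideal

/-- A Noetherian commutative ring satisfying the double annihilator condition for
all ideals is self-injective. -/
theorem selfinjective_of_double_annihilator (R : Type*) [CommRing R] [IsNoetherianRing R]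
    (h : ∀ J : Ideal R, Submodule.annihilator (Submodule.annihilator J) = J) :
    Module.Injective R R := by
  refine Module.Baer.injective fun I g ↦ ?_
  obtain ⟨r, hr⟩ := Ideal.extendsToRing_of_fg h (IsNoetherian.noetherian I) g
  exact ⟨r • LinearMap.id, fun x hx ↦ (hr ⟨x, hx⟩).symm⟩
end

section
/- Let K be a field, let R be a commutative graded K-algebra with R_i = 0 for i < 0 and i > d, R_0 = K, each R_i finite-dimensional, equipped with a K-linear map θ : R_d → K such that (a,b) ↦ θ(ab) is a perfect pairing between R_i and R_{d-i} for 0 ≤ i ≤ d (a Poincaré duality algebra). Then R is injective as a graded R-module over itself. -/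
/-!
The functional `t = θ ∘ π_d`, with `π_d` the projection to the top degree, makes `(u, v) ↦ t (u v)`
a nondegenerate pairing on the finite-dimensional algebra `A`: a homogeneous element of degree `i`
only pairs with the degree `d - i` component. Hence `m ↦ t (m * ·)` is an isomorphism `A ≃ A^*`.
Given `φ : J → A`, extend `t ∘ φ` from `J` to all of `A` and write it as `t (m * ·)`; then
`t (x (φ a - a m)) = 0` for all `x`, so `φ` is multiplication by `m`. If `φ` shifts degrees by `e`,
comparing the components of degree `k + e` on homogeneous elements of `J` of degree `k` shows that
the component `m_e` works as well.
-/

open DirectSum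

section Graded

variable {ι R A : Type*} [DecidableEq ι] [AddMonoid ι] [CommSemiring R] [Semiring A] [Algebra R A]

theorem GradedAlgebra.finite_of_support_subset (𝒜 : ι → Submodule R A) [GradedAlgebra 𝒜]
    [∀ i, Module.Finite R (𝒜 i)] (s : Finset ι) (hs : ∀ i ∉ s, 𝒜 i = ⊥) :
    Module.Finite R A := by
  have htop : s.sup 𝒜 = ⊤ := by
    refine top_unique ((DirectSum.Decomposition.isInternal 𝒜).submodule_iSup_eq_top.ge.trans ?_)
    refine iSup_le fun i => ?_
    by_cases hi : i ∈ s
    · exact Finset.le_sup hi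
    · simp [hs i hi]
  exact Module.finite_def.2 <|
    htop ▸ Submodule.fg_finset_sup s 𝒜 fun i _ => Module.Finite.iff_fg.1 inferInstance

def GradedAlgebra.component (𝒜 : ι → Submodule R A) [GradedAlgebra 𝒜] (i : ι) :
    A →ₗ[R] 𝒜 i :=
  DirectSum.component R ι (fun i => 𝒜 i) i ∘ₗ (decomposeLinearEquiv 𝒜).toLinearMap

end Graded

section GradedRing

variable {ι A σ : Type*} [DecidableEq ι] [CommRing A] [SetLike σ A] [AddSubmonoidClass σ A]
  (𝒜 : ι → σ)

theorem eq_zero_of_forall_decompose_mul [AddCommGroup ι] [GradedRing 𝒜] {d : ι} {M : Type*}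
    [AddCommMonoid M] (t : 𝒜 d →+ M)
    (hnd : ∀ i, ∀ a ∈ 𝒜 i, (∀ b ∈ 𝒜 (d - i), t (decompose 𝒜 (a * b) d) = 0) → a = 0)
    (c : A) (hc : ∀ x : A, t (decompose 𝒜 (x * c) d) = 0) : c = 0 := by
  classical
  have hcomp : ∀ i, (decompose 𝒜 c i : A) = 0 := fun i =>
    hnd i _ (decompose 𝒜 c i).2 fun b hb => by
      have hmem : (decompose 𝒜 c i : A) * b ∈ 𝒜 d := by
        simpa using SetLike.GradedMul.mul_mem (decompose 𝒜 c i).2 hb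
      have h : decompose 𝒜 (b * c) d = decompose 𝒜 ((decompose 𝒜 c i : A) * b) d := by
        ext
        rw [decompose_of_mem_same 𝒜 hmem, mul_comm _ b, ← coe_decompose_mul_add_of_left_mem 𝒜 hb,
          sub_add_cancel]
      rw [← h, hc]
  rw [← sum_support_decompose 𝒜 c]
  exact Finset.sum_eq_zero fun i _ => hcomp i

theorem Ideal.IsHomogeneous.apply_eq_mul_decompose [AddLeftCancelMonoid ι] [GradedRing 𝒜]
    {J : Ideal A} (hJ : J.IsHomogeneous 𝒜) {e : ι} (φ : J →ₗ[A] A)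
    (hφ : ∀ (k : ι) (a : A) (haJ : a ∈ J), a ∈ 𝒜 k → φ ⟨a, haJ⟩ ∈ 𝒜 (k + e))
    {m : A} (hm : ∀ (a : A) (ha : a ∈ J), φ ⟨a, ha⟩ = a * m) (a : A) (haJ : a ∈ J) :
    φ ⟨a, haJ⟩ = a * decompose 𝒜 m e := by
  classical
  have hhom : ∀ {k : ι} {b : A} (hbJ : b ∈ J), b ∈ 𝒜 k → φ ⟨b, hbJ⟩ = b * decompose 𝒜 m e :=
    fun {k} b hbJ hbk => by
      rw [← decompose_of_mem_same 𝒜 (hφ k b hbJ hbk), hm, coe_decompose_mul_add_of_left_mem 𝒜 hbk]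
  have hsum : (⟨a, haJ⟩ : J) = ∑ i ∈ (decompose 𝒜 a).support, ⟨decompose 𝒜 a i, hJ i haJ⟩ :=
    Subtype.ext <| by rw [AddSubmonoidClass.coe_finsetSum, sum_support_decompose]
  rw [hsum, map_sum]
  conv_rhs => rw [← sum_support_decompose 𝒜 a, Finset.sum_mul]
  exact Finset.sum_congr rfl fun i _ => hhom (hJ i haJ) (decompose 𝒜 a i).2

end GradedRing

section Frobenius

variable {K A : Type*} [Field K] [CommRing A] [Algebra K A] [FiniteDimensional K A]

theorem Ideal.exists_eq_mul_of_nondegenerate (t : A →ₗ[K] K)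
    (ht : ∀ c : A, (∀ x : A, t (x * c) = 0) → c = 0) (J : Ideal A) (φ : J →ₗ[A] A) :
    ∃ m : A, ∀ (a : A) (ha : a ∈ J), φ ⟨a, ha⟩ = a * m := by
  let Φ : A →ₗ[K] Module.Dual K A := (LinearMap.mul K A).compr₂ t
  have hΦ : Function.Injective Φ := by
    refine (injective_iff_map_eq_zero Φ).2 fun c hc => ht c fun x => ?_
    rw [mul_comm]
    exact LinearMap.congr_fun hc x
  have hΦ' : Function.Surjective Φ :=
    (LinearMap.injective_iff_surjective_of_finrank_eq_finrank
      (Subspace.dual_finrank_eq (V := A)).symm).1 hΦ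
  obtain ⟨g, hg⟩ := LinearMap.exists_extend (p := J.restrictScalars K)
    (t ∘ₗ φ.restrictScalars K)
  obtain ⟨m, rfl⟩ := hΦ' g
  refine ⟨m, fun a ha => sub_eq_zero.1 <| ht _ fun x => ?_⟩
  have hxa : x * φ ⟨a, ha⟩ = φ ⟨x * a, J.mul_mem_left x ha⟩ := (φ.map_smul x ⟨a, ha⟩).symm
  have hg' : t (φ ⟨x * a, J.mul_mem_left x ha⟩) = t (m * (x * a)) :=
    (LinearMap.congr_fun hg ⟨x * a, J.mul_mem_left x ha⟩).symm
  rw [mul_sub, map_sub, hxa, hg', sub_eq_zero]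
  congr 1
  ring

end Frobenius

/-- A Poincaré duality algebra (a ℤ-graded commutative K-algebra, concentrated in
degrees 0..d, with R₀ = K, finite-dimensional pieces, and a perfect pairing
R_i × R_{d-i} → K given by θ(ab)) is injective as a graded module over itself.
Injectivity is expressed via the graded Baer criterion: every degree-shifting
homomorphism from a homogeneous ideal to the ring is given by multiplication by a
homogeneous element. -/
theorem poincare_duality_selfinjective (K : Type*) [Field K]
    (A : Type*) [CommRing A] [Algebra K A]
    (𝒜 : ℤ → Submodule K A) [GradedAlgebra 𝒜] (d : ℤ)
    (hneg : ∀ i : ℤ, i < 0 → 𝒜 i = ⊥)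
    (hbig : ∀ i : ℤ, d < i → 𝒜 i = ⊥)
    (hfin : ∀ i : ℤ, FiniteDimensional K (𝒜 i))
    (θ : 𝒜 d →ₗ[K] K)
    (hperf : ∀ (i : ℤ), 0 ≤ i → i ≤ d → ∀ (a : A) (ha : a ∈ 𝒜 i),
      (∀ (b : A) (hb : b ∈ 𝒜 (d - i)),
        θ ⟨a * b, by
          rw [show d = i + (d - i) by ring]
          exact SetLike.mul_mem_graded ha hb⟩ = 0) → a = 0) :
    ∀ (J : Ideal A), Ideal.IsHomogeneous 𝒜 J →
      ∀ (e : ℤ) (φ : J →ₗ[A] A),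
        (∀ (k : ℤ) (a : A) (haJ : a ∈ J), a ∈ 𝒜 k → φ ⟨a, haJ⟩ ∈ 𝒜 (k + e)) →
        ∃ m ∈ 𝒜 e, ∀ (a : A) (haJ : a ∈ J), φ ⟨a, haJ⟩ = a * m := by
  intro J hJ e φ hφ
  have hsupp : ∀ i ∉ Finset.Icc 0 d, 𝒜 i = ⊥ := fun i hi => by
    rw [Finset.mem_Icc, not_and_or, not_le, not_le] at hi
    exact hi.elim (hneg i) (hbig i)
  have : FiniteDimensional K A := GradedAlgebra.finite_of_support_subset 𝒜 _ hsupp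
  have hnd : ∀ c : A, (∀ x : A, (θ ∘ₗ GradedAlgebra.component 𝒜 d) (x * c) = 0) → c = 0 := by
    refine eq_zero_of_forall_decompose_mul 𝒜 θ.toAddMonoidHom fun i a ha hab => ?_
    by_cases hi : i ∈ Finset.Icc 0 d
    · obtain ⟨hi0, hid⟩ := Finset.mem_Icc.1 hi
      refine hperf i hi0 hid a ha fun b hb => ?_
      rw [← hab b hb]
      exact congrArg θ (Subtype.ext (decompose_of_mem_same 𝒜 (Subtype.prop _)).symm)
    · simpa [hsupp i hi] using ha
  obtain ⟨m, hm⟩ := Ideal.exists_eq_mul_of_nondegenerate _ hnd J φ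
  exact ⟨_, (decompose 𝒜 m e).2, hJ.apply_eq_mul_decompose 𝒜 φ hφ hm⟩
end

section
/- In the ring C = F_2[y_0, y_1, ...]/(y_i^3 + y_i y_{i+1} : i ≥ 0), for all m ≥ 0 and k ≥ 0 one has y_m^{2^k - 1} = y_m y_{m+1} ⋯ y_{m+k-1} (the product of the k consecutive generators starting at y_m). -/
open MvPolynomial in
/-- The cube algebra C = F₂[y₀,y₁,...]/(yᵢ³ + yᵢyᵢ₊₁). -/
noncomputable abbrev CubeAlgebra : Type :=
  MvPolynomial ℕ (ZMod 2) ⧸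
    Ideal.span (Set.range fun i : ℕ =>
      (X i : MvPolynomial ℕ (ZMod 2)) ^ 3 + X i * X (i + 1))

open MvPolynomial in
noncomputable def cubeY (i : ℕ) : CubeAlgebra :=
  Ideal.Quotient.mk _ (X i)

/-!
The relation `a ^ 3 = a * b` lets each factor `a ^ 2` next to an `a` be traded for `b`, so
`a ^ (2 * n + 1) = a * b ^ n`. Since `2 ^ (k + 1) - 1 = 2 * (2 ^ k - 1) + 1`, this gives
`y m ^ (2 ^ (k + 1) - 1) = y m * y (m + 1) ^ (2 ^ k - 1)`, and induction on `k` unrolls the product.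
-/

section CommMonoid

variable {M : Type*} [CommMonoid M]

theorem pow_two_mul_add_one_of_pow_three_eq_mul {a b : M} (h : a ^ 3 = a * b) (n : ℕ) :
    a ^ (2 * n + 1) = a * b ^ n := by
  induction n with
  | zero => simp
  | succ n ih =>
    calc a ^ (2 * (n + 1) + 1) = a ^ (2 * n + 1) * a ^ 2 := by rw [← pow_add]; ring_nf
      _ = a ^ 3 * b ^ n := by rw [ih, mul_right_comm, ← pow_succ']
      _ = a * b ^ (n + 1) := by rw [h, mul_assoc, ← pow_succ']

theorem pow_two_pow_sub_one_eq_prod_range {y : ℕ → M} (hy : ∀ i, y i ^ 3 = y i * y (i + 1))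
    (m k : ℕ) : y m ^ (2 ^ k - 1) = ∏ i ∈ Finset.range k, y (m + i) := by
  induction k generalizing m with
  | zero => simp
  | succ k ih =>
    have hexp : 2 ^ (k + 1) - 1 = 2 * (2 ^ k - 1) + 1 := by
      have := Nat.one_le_two_pow (n := k)
      rw [pow_succ]
      omega
    rw [hexp, pow_two_mul_add_one_of_pow_three_eq_mul (hy m), ih, Finset.prod_range_succ', mul_comm,
      add_zero]
    simp only [add_assoc, add_comm 1]

end CommMonoid

open MvPolynomial in
theorem cubeY_pow_three (i : ℕ) : cubeY i ^ 3 = cubeY i * cubeY (i + 1) := by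
  rw [cubeY, cubeY, ← map_pow, ← map_mul, Ideal.Quotient.eq, CharTwo.sub_eq_add]
  exact Ideal.subset_span ⟨i, rfl⟩

/-- In C, y_m^(2^k - 1) = y_m y_{m+1} ⋯ y_{m+k-1}. -/
theorem cube_y_pow (m k : ℕ) :
    cubeY m ^ (2 ^ k - 1) = ∏ i ∈ Finset.range k, cubeY (m + i) :=
  pow_two_pow_sub_one_eq_prod_range cubeY_pow_three m k
end

section
/- Let K be a field and let P be the set of functions a : [0,1] → K whose support supp(a) = {q : a(q) ≠ 0} is well-ordered, with pointwise addition and multiplication given by (ab)(w) = Σ_{u+v=w, u,v ∈ [0,1]} a(u)b(v). Then every nonzero a ∈ P with a(0) = 0 is nilpotent, and every a ∈ P with a(0) ≠ 0 is invertible in P. -/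
section
variable {K : Type*} [Field K]

/-- An infinite root series: a function [0,1] → K (given as a function on ℝ
supported in [0,1]) with well-ordered support. -/
def IsRootSeries (a : ℝ → K) : Prop :=
  Function.support a ⊆ Set.Icc 0 1 ∧ (Function.support a).IsWF

/-- The (truncated) convolution product on the infinite root algebra:
(ab)(w) = Σ_{u+v=w} a(u) b(v) for w ∈ [0,1], and 0 outside [0,1]. -/
noncomputable def rootMul (a b : ℝ → K) : ℝ → K := fun w =>
  if w ∈ Set.Icc (0 : ℝ) 1 then ∑ᶠ u : ℝ, a u * b (w - u) else 0

/-- The multiplicative identity: e(0) = 1, e(q) = 0 otherwise. -/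
noncomputable def rootOne : ℝ → K := fun q => if q = 0 then 1 else 0

/-- Powers under the convolution product. -/
noncomputable def rootPow (a : ℝ → K) : ℕ → (ℝ → K)
  | 0 => rootOne
  | n + 1 => rootMul a (rootPow a n)

end

/-!
Root series embed into the Hahn series field `K⟦ℝ⟧`, and `rootMul` is the Hahn product
truncated to `[0, 1]`. If `a(0) = 0`, the support of `a` is bounded below by some `m > 0`
(its least element), so the support of `aⁿ` lies in `[n m, ∞)` and `aⁿ = 0` once `n m > 1`.
If `a(0) ≠ 0`, the Hahn inverse of `a` has order `0`; since the truncated product only sees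
coefficients at exponents `≤ 1`, truncating that inverse to `[0, 1]` gives an inverse in `P`.
-/

open Set Function
open scoped HahnSeries

namespace HahnSeries

variable {Γ R : Type*}

theorem finsum_coeff_mul_coeff_sub [AddCommGroup Γ] [PartialOrder Γ]
    [IsOrderedCancelAddMonoid Γ] [NonUnitalNonAssocSemiring R] (x y : R⟦Γ⟧) (g : Γ) :
    ∑ᶠ u, x.coeff u * y.coeff (g - u) = (x * y).coeff g := by
  classical
  set s := Finset.antidiagonal x.isPWO_support y.isPWO_support g
  have hs : ∀ ij ∈ s, ij.2 = g - ij.1 := fun ij hij => by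
    rw [← (Finset.mem_antidiagonal.1 hij).2.2, add_sub_cancel_left]
  have hinj : Set.InjOn Prod.fst (s : Set (Γ × Γ)) := fun ij hij ij' hij' h =>
    Prod.ext h (by rw [hs ij hij, hs ij' hij', h])
  rw [coeff_mul, Finset.sum_congr rfl fun ij hij => by rw [hs ij hij],
    ← Finset.sum_image (f := fun u => x.coeff u * y.coeff (g - u)) hinj]
  refine finsum_eq_sum_of_support_subset _ fun u hu => ?_
  exact Finset.mem_image.2 ⟨(u, g - u), Finset.mem_antidiagonal.2
    ⟨left_ne_zero_of_mul hu, right_ne_zero_of_mul hu, add_sub_cancel u g⟩, rfl⟩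

variable [AddCommGroup Γ] [LinearOrder Γ] [IsOrderedAddMonoid Γ] [Field R] {x : R⟦Γ⟧}

theorem order_inv (hx : x ≠ 0) : x⁻¹.order = -x.order := by
  have h := order_mul hx (inv_ne_zero hx)
  rw [mul_inv_cancel₀ hx, order_one] at h
  exact eq_neg_of_add_eq_zero_right h.symm

theorem coeff_inv_eq_zero_of_neg (hx : ∀ g < 0, x.coeff g = 0) (h0 : x.coeff 0 ≠ 0) {g : Γ}
    (hg : g < 0) : x⁻¹.coeff g = 0 := by
  have hx0 : x ≠ 0 := ne_zero_of_coeff_ne_zero h0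
  have hord : x.order = 0 :=
    le_antisymm (order_le_of_coeff_ne_zero h0) ((le_order_iff_forall hx0).2 hx)
  exact coeff_eq_zero_of_lt_order (by rwa [order_inv hx0, hord, neg_zero])

end HahnSeries

section

variable {K : Type*} [Field K]

theorem rootMul_apply_of_notMem {a b : ℝ → K} {w : ℝ} (hw : w ∉ Icc 0 1) : rootMul a b w = 0 :=
  if_neg hw

theorem exists_ne_zero_of_rootMul_ne_zero {a b : ℝ → K} {w : ℝ} (h : rootMul a b w ≠ 0) :
    ∃ u, a u ≠ 0 ∧ b (w - u) ≠ 0 := by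
  by_contra! hab
  by_cases hw : w ∈ Icc 0 1
  · refine h ?_
    rw [rootMul, if_pos hw]
    exact finsum_eq_zero_of_forall_eq_zero fun u => by
      by_cases hu : a u = 0
      · rw [hu, zero_mul]
      · rw [hab u hu, mul_zero]
  · exact h (rootMul_apply_of_notMem hw)

theorem rootMul_coeff (A B : K⟦ℝ⟧) :
    rootMul A.coeff B.coeff = (Icc 0 1).indicator (A * B).coeff := by
  funext w
  by_cases hw : w ∈ Icc 0 1
  · rw [rootMul, if_pos hw, indicator_of_mem hw, HahnSeries.finsum_coeff_mul_coeff_sub]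
  · rw [rootMul, if_neg hw, indicator_of_notMem hw]

theorem indicator_coeff_one : (Icc 0 1).indicator (1 : K⟦ℝ⟧).coeff = rootOne := by
  funext w
  by_cases hw : w = 0
  · simp [hw, rootOne]
  · simp [indicator, HahnSeries.coeff_one, rootOne, hw]

theorem rootMul_congr_right {a b b' : ℝ → K} (ha : ∀ u, a u ≠ 0 → 0 ≤ u)
    (hb : ∀ v ≤ 1, b v = b' v) : rootMul a b = rootMul a b' := by
  funext w
  unfold rootMul
  split_ifs with hw
  · refine finsum_congr fun u => ?_
    by_cases hu : a u = 0
    · rw [hu, zero_mul, zero_mul]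
    · rw [hb _ (by linarith [hw.2, ha u hu])]
  · rfl

theorem isRootSeries_indicator_coeff (B : K⟦ℝ⟧) : IsRootSeries ((Icc 0 1).indicator B.coeff) := by
  rw [IsRootSeries, support_indicator]
  exact ⟨inter_subset_left, B.isWF_support.mono inter_subset_right⟩

theorem rootPow_eq_zero_of_lt {a : ℝ → K} {m : ℝ} (hm : ∀ u, a u ≠ 0 → m ≤ u) (n : ℕ) {w : ℝ}
    (hw : w < n * m) : rootPow a n w = 0 := by
  induction n generalizing w with
  | zero => exact if_neg (by simp at hw; exact hw.ne)
  | succ n ih =>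
    by_contra h
    obtain ⟨u, hu, hwu⟩ := exists_ne_zero_of_rootMul_ne_zero h
    push_cast at hw
    exact hwu (ih (by linarith [hm u hu]))

theorem rootPow_eq_zero_of_one_lt {a : ℝ → K} {m : ℝ} (hm : ∀ u, a u ≠ 0 → m ≤ u) {n : ℕ}
    (hn : 1 < n * m) : rootPow a n = 0 := by
  funext w
  rcases n with _ | n
  · simp at hn; linarith
  rcases le_or_gt w 1 with hw | hw
  · exact rootPow_eq_zero_of_lt hm _ (hw.trans_lt hn)
  · exact rootMul_apply_of_notMem fun h => hw.not_ge h.2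

namespace IsRootSeries

variable {a : ℝ → K} (ha : IsRootSeries a)
include ha

theorem exists_pos_le (hne : a ≠ 0) (h0 : a 0 = 0) : ∃ m > 0, ∀ u, a u ≠ 0 → m ≤ u := by
  have hs : (support a).Nonempty := support_nonempty_iff.2 hne
  have hmin := ha.2.min_mem hs
  refine ⟨ha.2.min hs, lt_of_le_of_ne (ha.1 hmin).1 fun h => hmin (h ▸ h0), ?_⟩
  exact fun u hu => ha.2.min_le hs hu

theorem exists_rootPow_eq_zero (hne : a ≠ 0) (h0 : a 0 = 0) :
    ∃ n : ℕ, 0 < n ∧ rootPow a n = 0 := by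
  obtain ⟨m, hm0, hm⟩ := ha.exists_pos_le hne h0
  obtain ⟨n, hn⟩ := exists_nat_gt (1 / m)
  have hnm : 1 < n * m := (div_lt_iff₀ hm0).1 hn
  exact ⟨n, Nat.pos_of_ne_zero fun h => by simp [h] at hnm; linarith,
    rootPow_eq_zero_of_one_lt hm hnm⟩

theorem exists_rootMul_eq_rootOne (h0 : a 0 ≠ 0) :
    ∃ b : ℝ → K, IsRootSeries b ∧ rootMul a b = rootOne := by
  let A : K⟦ℝ⟧ := ⟨a, ha.2.isPWO⟩
  have ha_nonneg : ∀ u, a u ≠ 0 → 0 ≤ u := fun u hu => (ha.1 hu).1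
  have hA_neg : ∀ v < 0, A.coeff v = 0 := fun v hv => by_contra fun h => hv.not_ge (ha_nonneg v h)
  have hA : A ≠ 0 := HahnSeries.ne_zero_of_coeff_ne_zero h0
  refine ⟨_, isRootSeries_indicator_coeff A⁻¹, ?_⟩
  calc rootMul a ((Icc 0 1).indicator A⁻¹.coeff) = rootMul A.coeff A⁻¹.coeff := by
        refine rootMul_congr_right ha_nonneg fun v hv => ?_
        by_cases hv0 : 0 ≤ v
        · exact indicator_of_mem (mem_Icc.2 ⟨hv0, hv⟩) _
        · rw [indicator_of_notMem fun h => hv0 h.1,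
            HahnSeries.coeff_inv_eq_zero_of_neg hA_neg h0 (not_le.1 hv0)]
    _ = (Icc 0 1).indicator (A * A⁻¹).coeff := rootMul_coeff A A⁻¹
    _ = rootOne := by rw [mul_inv_cancel₀ hA, indicator_coeff_one]

end IsRootSeries

end

/-- Every nonzero root series with a(0) = 0 is nilpotent, and every root series
with a(0) ≠ 0 is invertible. -/
theorem root_series_nilpotent_or_invertible (K : Type*) [Field K]
    (a : ℝ → K) (ha : IsRootSeries a) :
    (a ≠ 0 → a 0 = 0 → ∃ n : ℕ, 0 < n ∧ rootPow a n = 0) ∧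
    (a 0 ≠ 0 → ∃ b : ℝ → K, IsRootSeries b ∧ rootMul a b = rootOne) :=
  ⟨ha.exists_rootPow_eq_zero, ha.exists_rootMul_eq_rootOne⟩
end

section
/- In the infinite root algebra P over a field K, every ideal is of the form J_t = {a ∈ P : δ(a) > t} or J̄_t = {a ∈ P : δ(a) ≥ t} for some t ∈ [0,1], where δ(a) = min(supp(a)) for a ≠ 0 and δ(0) = ∞. Moreover ann_P(J_t) = J̄_{1−t} and ann_P(J̄_t) = J_{1−t}, and hence ann_P(ann_P(I)) = I for every ideal I of P. -/
section
variable {K : Type*} [Field K]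

/-- An ideal of the infinite root algebra P, described as a subset of root
series closed under addition and under multiplication by elements of P. -/
def IsRootIdeal (I : Set (ℝ → K)) : Prop :=
  (∀ a ∈ I, IsRootSeries a) ∧ (0 : ℝ → K) ∈ I ∧
  (∀ a ∈ I, ∀ b ∈ I, a + b ∈ I) ∧
  (∀ r : ℝ → K, IsRootSeries r → ∀ a ∈ I, rootMul r a ∈ I)

/-- J_t = {a ∈ P : δ(a) > t}, i.e. every element of the support exceeds t. -/
def rootJlt (t : ℝ) : Set (ℝ → K) :=
  {a | IsRootSeries a ∧ ∀ q ∈ Function.support a, t < q}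

/-- J̄_t = {a ∈ P : δ(a) ≥ t}. -/
def rootJge (t : ℝ) : Set (ℝ → K) :=
  {a | IsRootSeries a ∧ ∀ q ∈ Function.support a, t ≤ q}

def rootAnn (I : Set (ℝ → K)) : Set (ℝ → K) :=
  {x | IsRootSeries x ∧ ∀ a ∈ I, rootMul x a = 0}

end

/-!
A root series `a ≠ 0` is a Hahn series with coefficients in a field, hence invertible there. If
every support point of `b` is at least `δ(a)`, then `b a⁻¹` has nonnegative order, so its
restriction `r` to `[0,1]` is a root series, and `r a = b` because the truncated product only
sees exponents in `[0,1]`. Thus an ideal `I` contains every root series whose support lies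
above some support point of an element of `I`, which forces `I = J_t` or `I = J̄_t` with
`t` the infimum of these points. The annihilators are computed with the monomials `X^v`:
`(x X^v)(1) = x(1 - v)`.
-/

open Function Set

theorem HahnSeries.coeff_mul_eq_finsum {Γ R : Type*} [AddCommGroup Γ] [PartialOrder Γ]
    [IsOrderedCancelAddMonoid Γ] [NonUnitalNonAssocSemiring R] (X Y : HahnSeries Γ R) (w : Γ) :
    (X * Y).coeff w = ∑ᶠ u, X.coeff u * Y.coeff (w - u) := by
  classical
  set s := Finset.antidiagonal X.isPWO_support Y.isPWO_support w
  have hsupp : Function.support (fun u ↦ X.coeff u * Y.coeff (w - u)) ⊆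
      ((s.image Prod.fst : Finset Γ) : Set Γ) := by
    intro u hu
    simp only [Finset.coe_image, mem_image, Finset.mem_coe]
    exact ⟨(u, w - u), Finset.mem_antidiagonal.mpr
      ⟨left_ne_zero_of_mul hu, right_ne_zero_of_mul hu, add_sub_cancel u w⟩, rfl⟩
  have hfst : InjOn Prod.fst (s : Set (Γ × Γ)) := by
    intro p hp q hq hpq
    rw [Finset.mem_coe, Finset.mem_antidiagonal] at hp hq
    rw [hpq] at hp
    exact Prod.ext hpq (add_left_cancel (hp.2.2.trans hq.2.2.symm))
  rw [HahnSeries.coeff_mul, finsum_eq_finsetSum_of_support_subset _ hsupp, Finset.sum_image hfst]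
  refine Finset.sum_congr rfl fun p hp ↦ ?_
  rw [(Finset.mem_antidiagonal.mp hp).2.2.symm, add_sub_cancel_left]

namespace IsRootSeries

variable {K : Type*} [Field K]

theorem single {v : ℝ} (hv : v ∈ Icc (0 : ℝ) 1) : IsRootSeries (Pi.single v (1 : K)) := by
  rw [IsRootSeries, Pi.support_single_of_ne one_ne_zero]
  exact ⟨singleton_subset_iff.mpr hv, isWF_singleton⟩

theorem indicator_coeff {R : HahnSeries ℝ K} : IsRootSeries ((Icc 0 1).indicator R.coeff) :=
  ⟨support_indicator_subset, R.isPWO_support.isWF.mono <| by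
    rw [support_indicator]; exact inter_subset_right⟩

end IsRootSeries

section rootMul

variable {K : Type*} [Field K]

theorem rootMul_eq_zero_of_one_lt_add {x a : ℝ → K}
    (h : ∀ u ∈ support x, ∀ v ∈ support a, 1 < u + v) : rootMul x a = 0 := by
  funext w
  simp only [rootMul, Pi.zero_apply, ite_eq_right_iff]
  intro hw
  refine finsum_eq_zero_of_forall_eq_zero fun u ↦ ?_
  by_contra hne
  linarith [h u (left_ne_zero_of_mul hne) (w - u) (right_ne_zero_of_mul hne), hw.2]

theorem rootMul_single_apply_one (x : ℝ → K) (v : ℝ) :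
    rootMul x (Pi.single v 1) 1 = x (1 - v) := by
  rw [rootMul, if_pos (right_mem_Icc.mpr zero_le_one), finsum_eq_single _ (1 - v)]
  · simp
  · intro u hu
    rw [Pi.single_apply, if_neg (fun h ↦ hu (by linarith)), mul_zero]

theorem rootMul_coeff_s17 (X Y : HahnSeries ℝ K) :
    rootMul X.coeff Y.coeff = (Icc 0 1).indicator (X * Y).coeff := by
  funext w
  simp only [rootMul, indicator_apply, HahnSeries.coeff_mul_eq_finsum]

/-- Truncating the left factor to `[0,1]` does not change the product: the discarded exponents
`u > 1` only meet exponents `w - u < 0` of the right factor. -/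
theorem rootMul_indicator_coeff {R : HahnSeries ℝ K} (hR : 0 ≤ R.order) {a : ℝ → K}
    (ha : IsRootSeries a) : rootMul ((Icc 0 1).indicator R.coeff) a = rootMul R.coeff a := by
  funext w
  simp only [rootMul]
  split_ifs with hw
  · refine finsum_congr fun u ↦ ?_
    by_cases hu : u ∈ Icc (0 : ℝ) 1
    · rw [indicator_of_mem hu]
    rw [indicator_of_notMem hu, zero_mul]
    rcases not_and_or.mp hu with hu | hu
    · rw [HahnSeries.coeff_eq_zero_of_lt_order (by linarith), zero_mul]
    · have : a (w - u) = 0 := notMem_support.mp fun h ↦ by linarith [(ha.1 h).1, hw.2]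
      rw [this, mul_zero]
  · rfl

theorem exists_rootMul_eq {A B : HahnSeries ℝ K} (hA0 : A ≠ 0) (hA : IsRootSeries A.coeff)
    (hB : support B.coeff ⊆ Icc 0 1) (hAB : ∀ p ∈ support B.coeff, A.order ≤ p) :
    ∃ r, IsRootSeries r ∧ rootMul r A.coeff = B.coeff := by
  set R := B * A⁻¹
  have hRA : R * A = B := by rw [mul_assoc, inv_mul_cancel₀ hA0, mul_one]
  have hR : 0 ≤ R.order := by
    by_cases hR0 : R = 0
    · rw [hR0, HahnSeries.order_zero]
    have hB0 : B ≠ 0 := hRA ▸ mul_ne_zero hR0 hA0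
    have := hAB _ (mt HahnSeries.coeff_order_eq_zero.mp hB0)
    rw [← hRA, HahnSeries.order_mul hR0 hA0] at this
    linarith
  refine ⟨(Icc 0 1).indicator R.coeff, IsRootSeries.indicator_coeff, ?_⟩
  rw [rootMul_indicator_coeff hR hA, rootMul_coeff_s17, hRA, indicator_eq_self.mpr hB]

end rootMul

section rootAnn

variable {K : Type*} [Field K]

theorem single_one_sub_notMem_of_mem_rootAnn {S : Set (ℝ → K)} {x : ℝ → K}
    (hx : x ∈ rootAnn S) {q : ℝ} (hq : q ∈ support x) : Pi.single (1 - q) 1 ∉ S := by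
  intro hS
  apply mem_support.mp hq
  rw [← sub_sub_cancel 1 q, ← rootMul_single_apply_one x (1 - q), hx.2 _ hS, Pi.zero_apply]

theorem single_mem_rootJlt {t v : ℝ} (hv : v ∈ Icc (0 : ℝ) 1) (htv : t < v) :
    Pi.single v (1 : K) ∈ rootJlt t := by
  refine ⟨IsRootSeries.single hv, ?_⟩
  rw [Pi.support_single_of_ne one_ne_zero]
  exact fun p hp ↦ hp ▸ htv

theorem single_mem_rootJge {t v : ℝ} (hv : v ∈ Icc (0 : ℝ) 1) (htv : t ≤ v) :
    Pi.single v (1 : K) ∈ rootJge t := by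
  refine ⟨IsRootSeries.single hv, ?_⟩
  rw [Pi.support_single_of_ne one_ne_zero]
  exact fun p hp ↦ hp ▸ htv

theorem rootAnn_rootJlt (t : ℝ) : rootAnn (rootJlt t : Set (ℝ → K)) = rootJge (1 - t) := by
  ext x
  refine ⟨fun hx ↦ ⟨hx.1, fun q hq ↦ ?_⟩, fun hx ↦ ⟨hx.1, fun a ha ↦ ?_⟩⟩
  · by_contra! hqt
    exact single_one_sub_notMem_of_mem_rootAnn hx hq
      (single_mem_rootJlt (Icc.one_sub_mem (hx.1.1 hq)) (by linarith))
  · exact rootMul_eq_zero_of_one_lt_add fun u hu v hv ↦ by linarith [hx.2 u hu, ha.2 v hv]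

theorem rootAnn_rootJge (t : ℝ) : rootAnn (rootJge t : Set (ℝ → K)) = rootJlt (1 - t) := by
  ext x
  refine ⟨fun hx ↦ ⟨hx.1, fun q hq ↦ ?_⟩, fun hx ↦ ⟨hx.1, fun a ha ↦ ?_⟩⟩
  · by_contra! hqt
    exact single_one_sub_notMem_of_mem_rootAnn hx hq
      (single_mem_rootJge (Icc.one_sub_mem (hx.1.1 hq)) (by linarith))
  · exact rootMul_eq_zero_of_one_lt_add fun u hu v hv ↦ by linarith [hx.2 u hu, ha.2 v hv]

end rootAnn

namespace IsRootIdeal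

variable {K : Type*} [Field K] {I : Set (ℝ → K)}

theorem mem_of_le_support (hI : IsRootIdeal I) {a : ℝ → K} (ha : a ∈ I) {q : ℝ}
    (hq : q ∈ support a) {b : ℝ → K} (hb : IsRootSeries b) (hqb : ∀ p ∈ support b, q ≤ p) :
    b ∈ I := by
  have haR := hI.1 a ha
  let A : HahnSeries ℝ K := ⟨a, haR.2.isPWO⟩
  have hA0 : A ≠ 0 := fun h ↦ hq (congrFun (congrArg HahnSeries.coeff h) q)
  obtain ⟨r, hr, hrb⟩ := exists_rootMul_eq (B := ⟨b, hb.2.isPWO⟩) hA0 haR hb.1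
    fun p hp ↦ (HahnSeries.order_le_of_coeff_ne_zero (x := A) hq).trans (hqb p hp)
  exact (show rootMul r a = b from hrb) ▸ hI.2.2.2 r hr a ha

theorem eq_rootJge (hI : IsRootIdeal I) {a : ℝ → K} (ha : a ∈ I) {t : ℝ} (ht : t ∈ support a)
    (hle : ∀ b ∈ I, ∀ q ∈ support b, t ≤ q) : I = rootJge t :=
  Set.ext fun b ↦ ⟨fun hb ↦ ⟨hI.1 b hb, hle b hb⟩, fun hb ↦ hI.mem_of_le_support ha ht hb.1 hb.2⟩

theorem eq_rootJlt (hI : IsRootIdeal I) {t : ℝ} (hlt : ∀ b ∈ I, ∀ q ∈ support b, t < q)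
    (hinf : ∀ s ∈ Ioc t 1, ∃ a ∈ I, ∃ q ∈ support a, q < s) : I = rootJlt t := by
  ext b
  refine ⟨fun hb ↦ ⟨hI.1 b hb, hlt b hb⟩, fun ⟨hb, hbt⟩ ↦ ?_⟩
  rcases eq_or_ne b 0 with rfl | hb0
  · exact hI.2.1
  have hne : (support b).Nonempty := support_nonempty_iff.mpr hb0
  have hmin := hb.2.min_mem hne
  obtain ⟨a, ha, q, hq, hqm⟩ := hinf _ ⟨hbt _ hmin, (hb.1 hmin).2⟩
  exact hI.mem_of_le_support ha hq hb fun p hp ↦ hqm.le.trans (hb.2.min_le hne hp)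

/-- `t` is the infimum of all support points of elements of `I`; whether it is attained decides
between `J̄_t` and `J_t`, and `I = 0` is `J_1`. -/
theorem exists_eq_rootJlt_or_eq_rootJge (hI : IsRootIdeal I) :
    ∃ t ∈ Icc (0 : ℝ) 1, I = rootJlt t ∨ I = rootJge t := by
  set T := ⋃ a ∈ I, support a
  have hT : T ⊆ Icc 0 1 := iUnion₂_subset fun a ha ↦ (hI.1 a ha).1
  have hmemT : ∀ a ∈ I, ∀ q ∈ support a, q ∈ T := fun a ha q hq ↦ mem_iUnion₂_of_mem ha hq
  rcases T.eq_empty_or_nonempty with hT0 | hTne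
  · refine ⟨1, right_mem_Icc.mpr zero_le_one, Or.inl (hI.eq_rootJlt ?_ ?_)⟩
    · exact fun b hb q hq ↦ absurd (hmemT b hb q hq) (hT0 ▸ notMem_empty q)
    · exact fun s hs ↦ absurd hs.2 hs.1.not_ge
  have hbdd : BddBelow T := ⟨0, fun q hq ↦ (hT hq).1⟩
  have hle : ∀ b ∈ I, ∀ q ∈ support b, sInf T ≤ q :=
    fun b hb q hq ↦ csInf_le hbdd (hmemT b hb q hq)
  have htIcc : sInf T ∈ Icc (0 : ℝ) 1 :=
    ⟨le_csInf hTne fun q hq ↦ (hT hq).1, (csInf_le hbdd hTne.some_mem).trans (hT hTne.some_mem).2⟩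
  by_cases htT : sInf T ∈ T
  · obtain ⟨a, ha, hta⟩ := mem_iUnion₂.mp htT
    exact ⟨_, htIcc, Or.inr (hI.eq_rootJge ha hta hle)⟩
  refine ⟨_, htIcc, Or.inl (hI.eq_rootJlt (fun b hb q hq ↦ (hle b hb q hq).lt_of_ne ?_) ?_)⟩
  · rintro rfl
    exact htT (hmemT b hb _ hq)
  · intro s hs
    obtain ⟨q, hqT, hqs⟩ := exists_lt_of_csInf_lt hTne hs.1
    obtain ⟨a, ha, hqa⟩ := mem_iUnion₂.mp hqT
    exact ⟨a, ha, q, hqa, hqs⟩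

theorem rootAnn_rootAnn (hI : IsRootIdeal I) : rootAnn (rootAnn I) = I := by
  obtain ⟨t, -, rfl | rfl⟩ := hI.exists_eq_rootJlt_or_eq_rootJge
  · rw [rootAnn_rootJlt, rootAnn_rootJge, sub_sub_cancel]
  · rw [rootAnn_rootJge, rootAnn_rootJlt, sub_sub_cancel]

end IsRootIdeal

/-- Every ideal of the infinite root algebra P is J_t or J̄_t for some t ∈ [0,1];
moreover ann(J_t) = J̄_{1-t}, ann(J̄_t) = J_{1-t}, and ann(ann(I)) = I for every
ideal I. -/
theorem root_algebra_ideals (K : Type*) [Field K] :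
    (∀ I : Set (ℝ → K), IsRootIdeal I →
      (∃ t ∈ Set.Icc (0 : ℝ) 1, I = rootJlt t ∨ I = rootJge t) ∧
      rootAnn (rootAnn I) = I) ∧
    (∀ t ∈ Set.Icc (0 : ℝ) 1,
      rootAnn (rootJlt t : Set (ℝ → K)) = rootJge (1 - t) ∧
      rootAnn (rootJge t : Set (ℝ → K)) = rootJlt (1 - t)) :=
  ⟨fun _ hI ↦ ⟨hI.exists_eq_rootJlt_or_eq_rootJge, hI.rootAnn_rootAnn⟩,
    fun t _ ↦ ⟨rootAnn_rootJlt t, rootAnn_rootJge t⟩⟩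
end

section
/- Let Γ be the Rado graph: vertex set ℕ, with an edge between i ≠ j iff i ∈ B(j) or j ∈ B(i), where B(n) is the set of exponents in the binary expansion of n. Then for every finite graph G', every full subgraph G of G', and every full (induced) embedding f : G → Γ, there exists a full embedding f' : G' → Γ extending f. -/
/-!
The Rado graph has the extension property: for disjoint finite sets `A`, `B` of vertices there
is a vertex outside `A ∪ B` adjacent to all of `A` and to none of `B`. Indeed, taking `m` above
every element of `A ∪ B`, the number `z = 2 ^ m + ∑ a ∈ A, 2 ^ a` exceeds all of them, so its
neighbours among them are exactly its binary digits, namely the elements of `A`. Any graph with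
the extension property admits extensions of partial full embeddings of finite graphs one vertex
at a time: a new vertex `v` is sent to the witness for the images of the neighbours and the
non-neighbours of `v`.
-/

/-- The Rado graph on ℕ: i and j are adjacent iff i ≠ j and i occurs in the
binary expansion of j or j occurs in the binary expansion of i. -/
def RadoGraph : SimpleGraph ℕ where
  Adj i j := i ≠ j ∧ (Nat.testBit j i ∨ Nat.testBit i j)
  symm := by
    constructor
    intro i j h
    exact ⟨h.1.symm, h.2.symm⟩
  loopless := by
    constructor
    intro i h
    exact h.1 rfl

namespace SimpleGraph

variable {V W : Type*} {G : SimpleGraph V} {H : SimpleGraph W}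

def HasExtensionProperty (H : SimpleGraph W) : Prop :=
  ∀ A B : Set W, A.Finite → B.Finite → Disjoint A B →
    ∃ z ∉ A ∪ B, (∀ a ∈ A, H.Adj z a) ∧ ∀ b ∈ B, ¬H.Adj z b

def IsFullEmbeddingOn (G : SimpleGraph V) (H : SimpleGraph W) (g : V → W) (S : Set V) : Prop :=
  S.InjOn g ∧ ∀ u ∈ S, ∀ v ∈ S, (G.Adj u v ↔ H.Adj (g u) (g v))

namespace IsFullEmbeddingOn

variable {g g' : V → W} {S T : Set V}

theorem congr (hg : G.IsFullEmbeddingOn H g S) (h : S.EqOn g g') :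
    G.IsFullEmbeddingOn H g' S := by
  refine ⟨hg.1.congr h, fun u hu v hv ↦ ?_⟩
  rw [← h hu, ← h hv]
  exact hg.2 u hu v hv

theorem insert_of_notMem {v : V} (hg : G.IsFullEmbeddingOn H g S) (hv : v ∉ S)
    (hgv : g v ∉ g '' S) (hadj : ∀ u ∈ S, (G.Adj v u ↔ H.Adj (g v) (g u))) :
    G.IsFullEmbeddingOn H g (insert v S) := by
  refine ⟨(Set.injOn_insert hv).2 ⟨hg.1, hgv⟩, ?_⟩
  rintro u (rfl | hu) w (rfl | hw)
  · simp
  · exact hadj w hw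
  · rw [G.adj_comm, H.adj_comm]
    exact hadj u hu
  · exact hg.2 u hu w hw

theorem exists_extend_insert (hH : H.HasExtensionProperty) (hg : G.IsFullEmbeddingOn H g S)
    (hS : S.Finite) (v : V) :
    ∃ g', S.EqOn g' g ∧ G.IsFullEmbeddingOn H g' (insert v S) := by
  classical
  by_cases hv : v ∈ S
  · exact ⟨g, Set.eqOn_refl g S, by rwa [Set.insert_eq_of_mem hv]⟩
  set A := g '' {u ∈ S | G.Adj v u}
  set B := g '' {u ∈ S | ¬G.Adj v u}
  have hAB : Disjoint A B := by
    rw [Set.disjoint_left]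
    rintro _ ⟨u, ⟨hu, huv⟩, rfl⟩ ⟨w, ⟨hw, hwv⟩, hgw⟩
    exact hwv (hg.1 hu hw hgw.symm ▸ huv)
  have hmem (u) (hu : u ∈ S) : (G.Adj v u → g u ∈ A) ∧ (¬G.Adj v u → g u ∈ B) :=
    ⟨fun h ↦ ⟨u, ⟨hu, h⟩, rfl⟩, fun h ↦ ⟨u, ⟨hu, h⟩, rfl⟩⟩
  have hA : A.Finite := (hS.sep _).image g
  have hB : B.Finite := (hS.sep _).image g
  obtain ⟨z, hzAB, hzA, hzB⟩ := hH A B hA hB hAB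
  have heq : S.EqOn (Function.update g v z) g := fun u hu ↦
    Function.update_of_ne (ne_of_mem_of_not_mem hu hv) _ _
  refine ⟨Function.update g v z, heq,
    (hg.congr heq.symm).insert_of_notMem hv ?_ fun u hu ↦ ?_⟩
  · rw [heq.image_eq, Function.update_self]
    rintro ⟨u, hu, rfl⟩
    by_cases huv : G.Adj v u
    · exact hzAB (Or.inl ((hmem u hu).1 huv))
    · exact hzAB (Or.inr ((hmem u hu).2 huv))
  · rw [Function.update_self, heq hu]
    by_cases huv : G.Adj v u
    · exact iff_of_true huv (hzA _ ((hmem u hu).1 huv))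
    · exact iff_of_false huv (hzB _ ((hmem u hu).2 huv))

theorem exists_extend_union (hH : H.HasExtensionProperty) (hg : G.IsFullEmbeddingOn H g S)
    (hS : S.Finite) (hT : T.Finite) :
    ∃ g', S.EqOn g' g ∧ G.IsFullEmbeddingOn H g' (S ∪ T) := by
  induction T, hT using Set.Finite.induction_on with
  | empty => exact ⟨g, Set.eqOn_refl g S, by rwa [Set.union_empty]⟩
  | @insert v T _ hT ih =>
    obtain ⟨g₁, hg₁S, hg₁⟩ := ih
    obtain ⟨g₂, hg₂, hg₂v⟩ := hg₁.exists_extend_insert hH (hS.union hT) v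
    refine ⟨g₂, fun u hu ↦ (hg₂ (Or.inl hu)).trans (hg₁S hu), ?_⟩
    rwa [Set.union_insert]

end IsFullEmbeddingOn

end SimpleGraph

theorem Nat.testBit_sum_two_pow (s : Finset ℕ) (j : ℕ) :
    (∑ i ∈ s, 2 ^ i).testBit j ↔ j ∈ s := by
  rw [← Nat.mem_bitIndices, ← List.mem_toFinset, Finset.toFinset_bitIndices_sum_two_pow]

theorem radoGraph_adj_iff_testBit_of_lt {m n : ℕ} (h : n < m) :
    RadoGraph.Adj m n ↔ m.testBit n := by
  have hbit : n.testBit m = false := Nat.testBit_eq_false_of_lt (h.trans m.lt_two_pow_self)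
  simp [RadoGraph, h.ne', hbit]

theorem radoGraph_hasExtensionProperty : RadoGraph.HasExtensionProperty := by
  intro A B hA hB hAB
  obtain ⟨m, hm⟩ := (hA.union hB).bddAbove
  have hlt_m (n) (hn : n ∈ A ∪ B) : n < m + 1 := Nat.lt_succ_of_le (hm hn)
  set z := ∑ i ∈ insert (m + 1) hA.toFinset, 2 ^ i
  have hlt_z (n) (hn : n ∈ A ∪ B) : n < z :=
    (hlt_m n hn).trans (Finset.lt_geomSum_of_mem le_rfl (Finset.mem_insert_self _ _))
  have hadj (n) (hn : n ∈ A ∪ B) : RadoGraph.Adj z n ↔ n = m + 1 ∨ n ∈ A := by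
    rw [radoGraph_adj_iff_testBit_of_lt (hlt_z n hn), Nat.testBit_sum_two_pow, Finset.mem_insert,
      Set.Finite.mem_toFinset]
  refine ⟨z, fun hz ↦ (hlt_z z hz).false, fun a ha ↦ ?_, fun b hb ↦ ?_⟩
  · exact (hadj a (Or.inl ha)).2 (Or.inr ha)
  · rw [hadj b (Or.inr hb)]
    rintro (hbm | hbA)
    · exact (hlt_m b (Or.inr hb)).ne hbm
    · exact Set.disjoint_left.1 hAB hbA hb

/-- Any full embedding of a full subgraph of a finite graph into the Rado graph
extends to a full embedding of the whole graph. -/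
theorem rado_extension (V : Type*) [Fintype V] (G' : SimpleGraph V)
    (S : Set V) (f : S → ℕ) (hinj : Function.Injective f)
    (hfull : ∀ u v : S, G'.Adj u v ↔ RadoGraph.Adj (f u) (f v)) :
    ∃ f' : V → ℕ, Function.Injective f' ∧
      (∀ u v : V, G'.Adj u v ↔ RadoGraph.Adj (f' u) (f' v)) ∧
      ∀ s : S, f' s = f s := by
  set g : V → ℕ := Function.extend Subtype.val f 0
  have hg (s : S) : g s = f s := Subtype.val_injective.extend_apply f 0 s
  have hgS : G'.IsFullEmbeddingOn RadoGraph g S := by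
    refine ⟨fun u hu w hw h ↦ ?_, fun u hu w hw ↦ ?_⟩
    · rw [hg ⟨u, hu⟩, hg ⟨w, hw⟩] at h
      exact congrArg Subtype.val (hinj h)
    · rw [hg ⟨u, hu⟩, hg ⟨w, hw⟩]
      exact hfull ⟨u, hu⟩ ⟨w, hw⟩
  obtain ⟨f', hf'g, hf'⟩ :=
    hgS.exists_extend_union radoGraph_hasExtensionProperty S.toFinite Set.univ.toFinite
  rw [Set.union_univ] at hf'
  exact ⟨f', Set.injOn_univ.1 hf'.1, fun u v ↦ hf'.2 u trivial v trivial,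
    fun s ↦ (hf'g s.2).trans (hg s)⟩
end

section
/- For every ordinal α < ε₀, every finite set J of ordinals below ε₀, and every function ν : J → ℕ, there exists an ordinal γ < ε₀ with γ ∉ J such that for all β ∈ J: the coefficient of ω^β in the Cantor normal form of γ equals ν(β), and the coefficient of ω^γ in the Cantor normal form of β is 0. -/
/-!
Take `b < ε₀` above every element of `J`. Listing `J` in decreasing order, the ordinal
`x = Σ_{β ∈ J} ω^β · ν(β)` lies below `ω^b` and has coefficient `ν(β)` at each `β ∈ J`; prefixing
the term `ω^b` does not change these coefficients. The resulting `γ = ω^b + x` exceeds every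
`β ∈ J`, so `γ ∉ J` and `β < ω^γ`, whence `β` has coefficient `0` at `ω^γ`.
-/

open Ordinal Order

/-- ε₀ is the least ordinal satisfying ω^ε₀ = ε₀. -/
noncomputable def epsilon0 : Ordinal := sInf {o : Ordinal | Ordinal.omega0 ^ o = o}

/-- The coefficient of ω^β in the Cantor normal form of o. -/
noncomputable def cnfCoeff (o β : Ordinal) : Ordinal :=
  o / Ordinal.omega0 ^ β % Ordinal.omega0

theorem epsilon0_eq_epsilon_zero : epsilon0 = ε₀ :=
  le_antisymm (csInf_le' (omega0_opow_epsilon 0))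
    (le_csInf ⟨_, omega0_opow_epsilon 0⟩ fun _ ho => epsilon_zero_le_of_omega0_opow_le ho.le)

theorem isPrincipal_add_epsilon_zero : IsPrincipal (· + ·) ε₀ := by
  simpa using isPrincipal_add_omega0_opow ε₀

theorem omega0_opow_lt_epsilon_zero {b : Ordinal} (hb : b < ε₀) : ω ^ b < ε₀ := by
  simpa using (opow_lt_opow_iff_right one_lt_omega0).2 hb

theorem Finset.exists_forall_lt_of_isSuccLimit {α : Type*} [LinearOrder α] [OrderBot α]
    [SuccOrder α] {o : α} (ho : IsSuccLimit o) (J : Finset α) (hJ : ∀ β ∈ J, β < o) :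
    ∃ b < o, ∀ β ∈ J, β < b := by
  refine ⟨J.sup succ, (Finset.sup_lt_iff ho.bot_lt).2 fun β hβ => ho.succ_lt (hJ β hβ),
    fun β hβ => ?_⟩
  exact (lt_succ_of_not_isMax (hJ β hβ).not_isMax).trans_le (Finset.le_sup (f := succ) hβ)

section cnfCoeff

theorem cnfCoeff_eq_zero_of_lt {o β : Ordinal} (h : o < ω ^ β) : cnfCoeff o β = 0 := by
  rw [cnfCoeff, Ordinal.div_eq_zero_of_lt h, Ordinal.zero_mod]

theorem cnfCoeff_opow_mul_add {β n x : Ordinal} (hn : n < ω) (hx : x < ω ^ β) :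
    cnfCoeff (ω ^ β * n + x) β = n := by
  rw [cnfCoeff, Ordinal.mul_add_div _ (opow_ne_zero β omega0_ne_zero),
    Ordinal.div_eq_zero_of_lt hx, add_zero, Ordinal.mod_eq_of_lt hn]

/-- Writing `b = β + 1 + d`, the term `ω^b · q` is a multiple of `ω^β · ω`, so it is invisible
to the coefficient at `ω^β`. -/
theorem cnfCoeff_opow_mul_add_of_lt {b β x : Ordinal} (q : Ordinal) (hx : x < ω ^ b)
    (hβ : β < b) : cnfCoeff (ω ^ b * q + x) β = cnfCoeff x β := by
  obtain ⟨d, rfl⟩ : ∃ d, b = β + 1 + d :=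
    ⟨b - (β + 1), (Ordinal.add_sub_cancel_of_le (add_one_le_iff.2 hβ)).symm⟩
  rw [cnfCoeff, cnfCoeff, opow_add, opow_add, opow_one, mul_assoc, mul_assoc,
    Ordinal.mul_add_div _ (opow_ne_zero β omega0_ne_zero), Ordinal.mul_add_mod_self]

theorem exists_lt_omega0_opow_cnfCoeff_eq (J : Finset Ordinal) (c : Ordinal → ℕ) {b : Ordinal}
    (hJ : ∀ β ∈ J, β < b) : ∃ x < ω ^ b, ∀ β ∈ J, cnfCoeff x β = c β := by
  classical
  induction J using Finset.induction_on_max generalizing b with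
  | empty => exact ⟨0, opow_pos b omega0_pos, by simp⟩
  | insert a J hJa ih =>
    obtain ⟨x, hx, hxc⟩ := ih hJa
    refine ⟨ω ^ a * c a + x,
      opow_mul_add_lt_opow (natCast_lt_omega0 _) hx (hJ a (Finset.mem_insert_self a J)), ?_⟩
    rintro β hβ
    rcases Finset.mem_insert.1 hβ with rfl | hβJ
    · exact cnfCoeff_opow_mul_add (natCast_lt_omega0 _) hx
    · rw [cnfCoeff_opow_mul_add_of_lt _ hx (hJa β hβJ), hxc β hβJ]

end cnfCoeff

theorem epsilon0_extension_property_general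
    (J : Finset Ordinal) (hJ : ∀ β ∈ J, β < epsilon0) (ν : Ordinal → ℕ) :
    ∃ γ : Ordinal, γ < epsilon0 ∧ γ ∉ J ∧
      ∀ β ∈ J, cnfCoeff γ β = (ν β : Ordinal) ∧ cnfCoeff β γ = 0 := by
  rw [epsilon0_eq_epsilon_zero] at hJ ⊢
  obtain ⟨b, hbε, hJb⟩ := J.exists_forall_lt_of_isSuccLimit
    (isSuccLimit_of_isPrincipal_add (one_lt_omega0.trans (omega0_lt_epsilon 0))
      isPrincipal_add_epsilon_zero) hJ
  obtain ⟨x, hx, hxν⟩ := exists_lt_omega0_opow_cnfCoeff_eq J ν hJb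
  have hωb := omega0_opow_lt_epsilon_zero hbε
  have hJγ : ∀ β ∈ J, β < ω ^ b + x := fun β hβ =>
    (hJb β hβ).trans_le ((right_le_opow b one_lt_omega0).trans le_self_add)
  refine ⟨ω ^ b + x, isPrincipal_add_epsilon_zero hωb (hx.trans hωb),
    fun hγJ => (hJγ _ hγJ).false, fun β hβ => ⟨?_, ?_⟩⟩
  · simpa [hxν β hβ] using cnfCoeff_opow_mul_add_of_lt 1 hx (hJb β hβ)
  · exact cnfCoeff_eq_zero_of_lt ((hJγ β hβ).trans_le (right_le_opow _ one_lt_omega0))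

/-- The extension property for the ε₀-algebra: given a finite set J of ordinals
below ε₀ and ν : J → ℕ, there is γ < ε₀, γ ∉ J, whose CNF coefficient at each
β ∈ J is ν(β), while γ does not occur as an exponent-coefficient in any β ∈ J. -/
theorem epsilon0_extension_property (α : Ordinal) (hα : α < epsilon0)
    (J : Finset Ordinal) (hJ : ∀ β ∈ J, β < epsilon0) (ν : Ordinal → ℕ) :
    ∃ γ : Ordinal, γ < epsilon0 ∧ γ ∉ J ∧
      ∀ β ∈ J, cnfCoeff γ β = (ν β : Ordinal) ∧ cnfCoeff β γ = 0 :=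
  epsilon0_extension_property_general J hJ ν
end
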